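/- arXiv:math/0305133 — 6 statements merged into one kernel-verified Lean document; each statement's English description precedes it below -/
import Mathlib

section
/- For any positive integers a, q and any real α′, the Beatty sequences B(a/q, α′) and B(a/q, ⌈qα′⌉/q) are equal as sets of integers. -/
lemma floor_div_nat' (x : ℝ) (a : ℕ) (ha : 0 < a) : ⌊x / (a : ℝ)⌋ = ⌊x⌋ / (a : ℤ) := by
  have haR : (0 : ℝ) < a := by positivity
  have haZ : (0 : ℤ) < a := by exact_mod_cast ha
  rw [Int.floor_eq_iff]
  constructor
  · rw [le_div_iff₀ haR]
    calc ((⌊x⌋ / (a : ℤ) : ℤ) : ℝ) * a = (((⌊x⌋ / (a : ℤ)) * a : ℤ) : ℝ) := by push_cast; ring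
      _ ≤ (⌊x⌋ : ℝ) := by exact_mod_cast Int.ediv_mul_le ⌊x⌋ haZ.ne'
      _ ≤ x := Int.floor_le x
  · rw [div_lt_iff₀ haR]
    have h1 : x < (⌊x⌋ : ℝ) + 1 := Int.lt_floor_add_one x
    have h2 : (⌊x⌋ : ℤ) + 1 ≤ (⌊x⌋ / (a : ℤ) + 1) * a := by
      have := Int.lt_ediv_add_one_mul_self ⌊x⌋ haZ
      omega
    calc x < (⌊x⌋ : ℝ) + 1 := h1
      _ ≤ (((⌊x⌋ / (a : ℤ) + 1) * a : ℤ) : ℝ) := by exact_mod_cast h2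
      _ = ((⌊x⌋ / (a : ℤ) : ℤ) : ℝ) * a + a := by push_cast; ring
      _ = (((⌊x⌋ / (a : ℤ) : ℤ) : ℝ) + 1) * a := by ring

/-- The Beatty sequence `B(α,α') = (⌊(n-α')/α⌋)_{n ≥ 1}`, as a set of integers. -/
def beatty (α α' : ℝ) : Set ℤ := {k | ∃ n : ℕ, 1 ≤ n ∧ k = ⌊((n : ℝ) - α') / α⌋}

theorem stmt1 (a q : ℕ) (ha : 0 < a) (hq : 0 < q) (α' : ℝ) :
    beatty ((a : ℝ) / q) α' = beatty ((a : ℝ) / q) ((⌈(q : ℝ) * α'⌉ : ℝ) / q) := by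
  have hq' : (q : ℝ) ≠ 0 := Nat.cast_ne_zero.mpr hq.ne'
  have ha' : (a : ℝ) ≠ 0 := Nat.cast_ne_zero.mpr ha.ne'
  have key : ∀ n : ℕ, ⌊((n : ℝ) - α') / ((a : ℝ) / q)⌋
      = ⌊((n : ℝ) - (⌈(q : ℝ) * α'⌉ : ℝ) / q) / ((a : ℝ) / q)⌋ := by
    intro n
    have h1 : ((n : ℝ) - α') / ((a : ℝ) / q) = ((n : ℝ) - α') * q / a := by
      field_simp
    have h2 : ((n : ℝ) - (⌈(q : ℝ) * α'⌉ : ℝ) / q) / ((a : ℝ) / q)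
        = (((n * q : ℤ) - ⌈(q : ℝ) * α'⌉ : ℤ) : ℝ) / a := by
      push_cast
      field_simp
    rw [h1, h2, floor_div_nat' _ a ha, floor_div_nat' _ a ha]
    congr 1
    have h3 : ((n : ℝ) - α') * q = (((n * q : ℤ) : ℤ) : ℝ) + -((q : ℝ) * α') := by
      push_cast; ring
    rw [h3, Int.floor_intCast_add, Int.floor_neg, Int.floor_intCast]
    ring
  ext k
  constructor <;> rintro ⟨n, hn, rfl⟩ <;> exact ⟨n, hn, by rw [key n]⟩
end

section
/- Let α, β be positive irrational numbers and α′, β′ real numbers. The two-sided Beatty sequences S_α = {⌊(n−α′)/α⌋ : n ∈ ℤ} and S_β = {⌊(n−β′)/β⌋ : n ∈ ℤ} tile ℤ (are disjoint with union ℤ) if and only if α+β = 1, α′+β′ ∈ ℤ, and kα+α′ is not an integer for any k ∈ ℤ. -/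
/-!
Write `x_k = kα + α'`. An integer `n` satisfies `⌊(n - α')/α⌋ = k` iff `x_k ≤ n < x_{k+1}`,
so `k ∈ S_α` iff the counting function `A k = ⌈x_k⌉` jumps at `k`; likewise `B k = ⌈kβ + β'⌉`
for `S_β`. Disjointness forces `α, β < 1` (for `α ≥ 1`, `S_α = ℤ`); for `α, β ≤ 1` the jumps
are `0` or `1`, so the two sets tile `ℤ` iff `A + B` grows by exactly one at each step, i.e.
`A k + B k = c + k`. Comparing growth rates forces `α + β = 1`, and then, with `s = α' + β'`,
the quantity `⌈x_k⌉ + ⌈s - x_k⌉` is constant. It equals `⌈s⌉` or `⌈s⌉ + 1` according as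
`⌈x_k⌉ - x_k` is at most `⌈s⌉ - s` or not; since these defects are dense in `[0, 1)` for
irrational `α`, constancy holds exactly when `s ∈ ℤ` and no `x_k` is an integer.
-/

/-- The two-sided Beatty sequence `S_α = (⌊(n-α')/α⌋)_{n ∈ ℤ}`, as a set of integers. -/
def beattyZ (α α' : ℝ) : Set ℤ := {k | ∃ n : ℤ, k = ⌊((n : ℝ) - α') / α⌋}

open Set

noncomputable def beattyCeil (α α' : ℝ) (k : ℤ) : ℤ := ⌈(k : ℝ) * α + α'⌉

namespace Int

variable {R : Type*} [Field R] [LinearOrder R] [IsStrictOrderedRing R] [FloorRing R]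

lemma exists_mem_Ico_iff_ceil_lt {x y : R} : (∃ n : ℤ, x ≤ n ∧ (n : R) < y) ↔ (⌈x⌉ : R) < y := by
  constructor
  · rintro ⟨n, hxn, hny⟩
    exact (Int.cast_le.2 (Int.ceil_le.2 hxn)).trans_lt hny
  · exact fun h => ⟨⌈x⌉, Int.le_ceil x, h⟩

lemma ceil_add_ceil_sub_of_le {x s : R} (h : (⌈x⌉ : R) - x ≤ ⌈s⌉ - s) :
    ⌈x⌉ + ⌈s - x⌉ = ⌈s⌉ := by
  have hx := Int.le_ceil x
  have hs := Int.ceil_lt_add_one s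
  have : ⌈s - x⌉ = ⌈s⌉ - ⌈x⌉ := by
    rw [Int.ceil_eq_iff]
    push_cast
    constructor <;> linarith
  omega

lemma ceil_add_ceil_sub_of_lt {x s : R} (h : (⌈s⌉ : R) - s < ⌈x⌉ - x) :
    ⌈x⌉ + ⌈s - x⌉ = ⌈s⌉ + 1 := by
  have hx := Int.ceil_lt_add_one x
  have hs := Int.le_ceil s
  have : ⌈s - x⌉ = ⌈s⌉ - ⌈x⌉ + 1 := by
    rw [Int.ceil_eq_iff]
    push_cast
    constructor <;> linarith
  omega

lemma eq_add_of_forall_succ {f : ℤ → ℤ} (h : ∀ k, f (k + 1) = f k + 1) (k : ℤ) :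
    f k = f 0 + k := by
  induction k using Int.induction_on with
  | zero => simp
  | succ n ih => rw [h, ih]; ring
  | pred n ih =>
    have := h (-(n : ℤ) - 1)
    rw [sub_add_cancel] at this
    omega

end Int

lemma eq_zero_of_forall_intCast_mul_le {R : Type*} [Field R] [LinearOrder R] [IsStrictOrderedRing R]
    [Archimedean R] {γ C : R} (h : ∀ k : ℤ, (k : R) * γ ≤ C) : γ = 0 := by
  by_contra hγ
  obtain ⟨n, hn⟩ := exists_nat_gt (C / |γ|)
  rw [div_lt_iff₀ (abs_pos.2 hγ)] at hn
  rcases lt_or_gt_of_ne hγ with hneg | hpos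
  · have := h (-n)
    rw [abs_of_neg hneg] at hn
    push_cast at this
    linarith
  · have := h n
    rw [abs_of_pos hpos] at hn
    push_cast at this
    linarith

section BeattyCeil

variable {α α' : ℝ}

lemma mem_beattyZ_iff (hα : 0 < α) (k : ℤ) :
    k ∈ beattyZ α α' ↔ beattyCeil α α' k < beattyCeil α α' (k + 1) := by
  have hfloor : ∀ n : ℤ, k = ⌊((n : ℝ) - α') / α⌋ ↔
      (k : ℝ) * α + α' ≤ n ∧ (n : ℝ) < ((k + 1 : ℤ) : ℝ) * α + α' := by
    intro n
    rw [eq_comm, Int.floor_eq_iff, le_div_iff₀ hα, div_lt_iff₀ hα]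
    push_cast
    constructor <;> rintro ⟨h₁, h₂⟩ <;> constructor <;> linarith
  simp only [beattyZ, mem_ofPred_eq, hfloor, Int.exists_mem_Ico_iff_ceil_lt, beattyCeil,
    Int.lt_ceil]

lemma beattyCeil_le_succ (hα : 0 ≤ α) (k : ℤ) : beattyCeil α α' k ≤ beattyCeil α α' (k + 1) :=
  Int.ceil_le_ceil (by push_cast; linarith)

lemma beattyCeil_succ_le (hα : α ≤ 1) (k : ℤ) :
    beattyCeil α α' (k + 1) ≤ beattyCeil α α' k + 1 := by
  have := Int.le_ceil ((k : ℝ) * α + α')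
  rw [beattyCeil, beattyCeil, Int.ceil_le]
  push_cast
  linarith

lemma beattyZ_eq_univ (hα : 1 ≤ α) : beattyZ α α' = univ := by
  refine eq_univ_of_forall fun k => (mem_beattyZ_iff (by linarith) k).2 ?_
  have := Int.ceil_lt_add_one ((k : ℝ) * α + α')
  rw [beattyCeil, beattyCeil, Int.lt_ceil]
  push_cast
  linarith

end BeattyCeil

lemma exists_ceil_sub_mem_Ioo {α : ℝ} (hα : Irrational α) (α' : ℝ) {a b : ℝ}
    (ha : 0 ≤ a) (hab : a < b) (hb : b ≤ 1) :
    ∃ k : ℤ, (⌈(k : ℝ) * α + α'⌉ : ℝ) - ((k : ℝ) * α + α') ∈ Ioo a b := by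
  have hdense : Dense (AddSubgroup.closure {α, 1} : Set ℝ) :=
    dense_addSubgroupClosure_pair_iff.2 (by simpa using hα)
  obtain ⟨t, ht, hat, htb⟩ := hdense.exists_between (show a + α' < b + α' by linarith)
  obtain ⟨i, m, rfl⟩ := AddSubgroup.mem_closure_pair.1 ht
  simp only [zsmul_eq_mul, mul_one] at hat htb
  refine ⟨-i, ?_⟩
  have hceil : ⌈((-i : ℤ) : ℝ) * α + α'⌉ = m := by
    rw [Int.ceil_eq_iff]
    push_cast
    constructor <;> linarith
  rw [hceil]
  push_cast
  constructor <;> linarith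

section TwoSequences

variable {α β α' β' : ℝ}

lemma lt_one_of_disjoint_beattyZ (hd : Disjoint (beattyZ α α') (beattyZ β β')) :
    α < 1 := by
  by_contra! h
  rw [beattyZ_eq_univ h, univ_disjoint] at hd
  exact hd.subset ⟨0, rfl⟩

lemma beattyZ_tiles_iff (hα : 0 < α) (hα1 : α ≤ 1) (hβ : 0 < β) (hβ1 : β ≤ 1) :
    (Disjoint (beattyZ α α') (beattyZ β β') ∧ beattyZ α α' ∪ beattyZ β β' = univ) ↔
      ∀ k : ℤ, beattyCeil α α' (k + 1) + beattyCeil β β' (k + 1) =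
        beattyCeil α α' k + beattyCeil β β' k + 1 := by
  simp only [Set.disjoint_left, eq_univ_iff_forall, mem_union, mem_beattyZ_iff hα,
    mem_beattyZ_iff hβ, ← forall_and]
  refine forall_congr' fun k => ?_
  have := beattyCeil_le_succ (α' := α') hα.le k
  have := beattyCeil_le_succ (α' := β') hβ.le k
  have := beattyCeil_succ_le (α' := α') hα1 k
  have := beattyCeil_succ_le (α' := β') hβ1 k
  omega

lemma add_eq_one_of_beattyCeil_add {c : ℤ}
    (hc : ∀ k : ℤ, beattyCeil α α' k + beattyCeil β β' k = c + k) : α + β = 1 := by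
  suffices α + β - 1 = 0 by linarith
  refine eq_zero_of_forall_intCast_mul_le (C := c - (α' + β')) fun k => ?_
  have hk : ((beattyCeil α α' k + beattyCeil β β' k : ℤ) : ℝ) = c + k := by exact_mod_cast hc k
  have := Int.le_ceil ((k : ℝ) * α + α')
  have := Int.le_ceil ((k : ℝ) * β + β')
  simp only [beattyCeil, Int.cast_add] at hk
  linarith

lemma beattyCeil_of_add_eq_one (hab : α + β = 1) (k : ℤ) :
    beattyCeil β β' k = ⌈(α' + β') - ((k : ℝ) * α + α')⌉ + k := by
  rw [beattyCeil, ← Int.ceil_add_intCast]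
  congr 1
  linear_combination (k : ℝ) * hab

end TwoSequences

lemma beattyCeil_add_beattyCeil {α β α' β' : ℝ} (hab : α + β = 1) {z : ℤ} (hz : α' + β' = z)
    (hni : ∀ k : ℤ, ¬ ∃ z : ℤ, (k : ℝ) * α + α' = (z : ℝ)) (k : ℤ) :
    beattyCeil α α' k + beattyCeil β β' k = z + 1 + k := by
  have hpos : (⌈α' + β'⌉ : ℝ) - (α' + β') < ⌈(k : ℝ) * α + α'⌉ - ((k : ℝ) * α + α') := by
    rw [hz, Int.ceil_intCast, sub_self, sub_pos]
    exact (Int.le_ceil _).lt_of_ne fun h => hni k ⟨_, h⟩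
  rw [beattyCeil_of_add_eq_one hab, beattyCeil, ← add_assoc, Int.ceil_add_ceil_sub_of_lt hpos,
    hz, Int.ceil_intCast]

lemma int_and_forall_not_int_of_ceil_add_ceil_sub_eq {α α' s : ℝ} (hα : Irrational α) {c : ℤ}
    (hc : ∀ k : ℤ, ⌈(k : ℝ) * α + α'⌉ + ⌈s - ((k : ℝ) * α + α')⌉ = c) :
    (∃ z : ℤ, s = z) ∧ ∀ k : ℤ, ¬ ∃ z : ℤ, (k : ℝ) * α + α' = (z : ℝ) := by
  set w : ℝ := ⌈s⌉ - s
  have hw0 : 0 ≤ w := sub_nonneg.2 (Int.le_ceil s)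
  have hw1 : w < 1 := by have := Int.ceil_lt_add_one s; linarith
  have hgt : ∀ k : ℤ, w < ⌈(k : ℝ) * α + α'⌉ - ((k : ℝ) * α + α') := by
    obtain ⟨k₀, hk₀, -⟩ := exists_ceil_sub_mem_Ioo hα α' hw0 hw1 le_rfl
    have hc₀ := hc k₀
    rw [Int.ceil_add_ceil_sub_of_lt hk₀] at hc₀
    intro k
    by_contra! hk
    have := hc k
    rw [Int.ceil_add_ceil_sub_of_le hk] at this
    omega
  have hw : w = 0 := by
    by_contra hw
    obtain ⟨k, -, hk⟩ := exists_ceil_sub_mem_Ioo hα α' le_rfl (hw0.lt_of_ne' hw) hw1.le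
    exact (hgt k).not_gt hk
  refine ⟨⟨⌈s⌉, by linarith⟩, fun k ⟨z, hz⟩ => ?_⟩
  have := hgt k
  rw [hz, Int.ceil_intCast, sub_self] at this
  exact hw0.not_gt this

theorem stmt2_general (α β α' β' : ℝ) (hα : 0 < α) (hβ : 0 < β)
    (hαi : Irrational α) :
    (Disjoint (beattyZ α α') (beattyZ β β') ∧ beattyZ α α' ∪ beattyZ β β' = Set.univ) ↔
      (α + β = 1 ∧ (∃ z : ℤ, α' + β' = (z : ℝ)) ∧
        ∀ k : ℤ, ¬ ∃ z : ℤ, (k : ℝ) * α + α' = (z : ℝ)) := by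
  constructor
  · intro htile
    have hα1 := lt_one_of_disjoint_beattyZ htile.1
    have hβ1 := lt_one_of_disjoint_beattyZ htile.1.symm
    have hstep := (beattyZ_tiles_iff hα hα1.le hβ hβ1.le).1 htile
    have hlin := Int.eq_add_of_forall_succ (f := fun k => beattyCeil α α' k + beattyCeil β β' k)
      hstep
    have hab := add_eq_one_of_beattyCeil_add hlin
    refine ⟨hab, int_and_forall_not_int_of_ceil_add_ceil_sub_eq hαi
      (c := beattyCeil α α' 0 + beattyCeil β β' 0) fun k => ?_⟩
    have := hlin k
    rw [beattyCeil_of_add_eq_one (α' := α') hab k] at this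
    change beattyCeil α α' k + _ = _
    omega
  · rintro ⟨hab, ⟨z, hz⟩, hni⟩
    refine (beattyZ_tiles_iff hα (by linarith) hβ (by linarith)).2 fun k => ?_
    rw [beattyCeil_add_beattyCeil hab hz hni, beattyCeil_add_beattyCeil hab hz hni]
    ring

theorem stmt2 (α β α' β' : ℝ) (hα : 0 < α) (hβ : 0 < β)
    (hαi : Irrational α) (hβi : Irrational β) :
    (Disjoint (beattyZ α α') (beattyZ β β') ∧ beattyZ α α' ∪ beattyZ β β' = Set.univ) ↔
      (α + β = 1 ∧ (∃ z : ℤ, α' + β' = (z : ℝ)) ∧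
        ∀ k : ℤ, ¬ ∃ z : ℤ, (k : ℝ) * α + α' = (z : ℝ)) :=
  stmt2_general α β α' β' hα hβ hαi
end

section
/- (Fraenkel's Partition Theorem, irrational case) Let α be irrational with 0 < α < 1, set β = 1 − α, and let α′, β′ be real. Then B(α,α′) and B(β,β′) tile ℕ if and only if 0 ≤ α+α′ ≤ 1, α′+β′ = 0, and kα+α′ is not an integer for any integer k ≥ 2. -/
/-- Two sets of integers tile ℕ if they are disjoint and their union is the positive integers. -/
def TilesN (S T : Set ℤ) : Prop := Disjoint S T ∧ S ∪ T = {n : ℤ | 1 ≤ n}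

/-!
`k ∈ B(α,α')` means that `[kα+α', (k+1)α+α')` contains an integer `n ≥ 1`, so for `α+α' ≤ 1`
the set `B(α,α') ∩ [1,N]` has `⌈(N+1)α+α'⌉ - 1` elements. If `B(α,α')` and `B(β,β')` tile, these
counts add up to `N`, i.e. `⌈x⌉ + ⌈α'+β' - x⌉ = 1` along the orbit `x = Nα + α + α'`; this orbit
is dense modulo 1, which forces `α'+β' = 0`. An integer value `kα+α' = z` would leave `k-1` in
neither set. Conversely, for `β' = -α'` a common element `k` forces `kα+α'` to be an integer in
`[1, k)`, and the counts add up to `N` as soon as `(N+1)α+α'` is not an integer.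
-/

open Finset Filter

lemma exists_nat_add_mul_mem_Ioo_add_int_of_pos {δ u v : ℝ} (hδ : 0 < δ) (hδuv : δ < v - u)
    (x : ℝ) : ∃ m : ℕ, ∃ K : ℤ, x + m * δ ∈ Set.Ioo (u + K) (v + K) := by
  set r := (u + ⌈x - u⌉ - x) / δ
  have hr : 0 ≤ r := div_nonneg (by linarith [Int.le_ceil (x - u)]) hδ.le
  have hlo := (div_lt_iff₀ hδ).1 (Nat.lt_floor_add_one r)
  have hhi := (le_div_iff₀ hδ).1 (Nat.floor_le hr)
  refine ⟨⌊r⌋₊ + 1, ⌈x - u⌉, ?_, ?_⟩ <;> push_cast <;> linarith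

lemma exists_nat_add_mul_mem_Ioo_add_int {δ u v : ℝ} (hδ : δ ≠ 0) (hδuv : |δ| < v - u)
    (x : ℝ) : ∃ m : ℕ, ∃ K : ℤ, x + m * δ ∈ Set.Ioo (u + K) (v + K) := by
  rcases hδ.lt_or_gt with hneg | hpos
  · obtain ⟨m, K, hlo, hhi⟩ := exists_nat_add_mul_mem_Ioo_add_int_of_pos (u := -v) (v := -u)
      (neg_pos.2 hneg) (by rw [abs_of_neg hneg] at hδuv; linarith) (-x)
    exact ⟨m, -K, by push_cast; linarith, by push_cast; linarith⟩
  · exact exists_nat_add_mul_mem_Ioo_add_int_of_pos hpos (by rwa [abs_of_pos hpos] at hδuv) x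

lemma Irrational.frequently_exists_int_mul_add_mem_Ioo_add_int {α : ℝ} (hα : Irrational α)
    (c : ℝ) {u v : ℝ} (huv : u < v) :
    ∃ᶠ N : ℤ in atTop, ∃ K : ℤ, N * α + c ∈ Set.Ioo (u + K) (v + K) := by
  -- Dirichlet: some `qα` lies within `v - u` of an integer `j`, and not on it, so adding
  -- multiples of `q` to `N` moves `Nα + c` modulo 1 in small nonzero steps `qα - j`.
  obtain ⟨n, hn⟩ := exists_nat_one_div_lt (sub_pos.2 huv)
  obtain ⟨j, q, hq, -, hqj⟩ := Real.exists_int_int_abs_mul_sub_le α n.succ_pos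
  have hδ : q * α - j ≠ 0 := sub_ne_zero.2 ((hα.intCast_mul hq.ne').ne_int j)
  have hδuv : |q * α - j| < v - u := by
    refine hqj.trans_lt (lt_of_le_of_lt ?_ hn)
    gcongr
    linarith
  refine frequently_atTop.2 fun N₀ => ?_
  obtain ⟨m, K, hlo, hhi⟩ := exists_nat_add_mul_mem_Ioo_add_int hδ hδuv (N₀ * α + c)
  refine ⟨N₀ + m * q, by nlinarith [m.cast_nonneg (α := ℤ)], K + m * j, ?_, ?_⟩ <;>
    push_cast <;> linarith

lemma eq_zero_of_eventually_ceil_add_ceil_sub_eq_one {α : ℝ} (hα : Irrational α) {c s : ℝ}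
    (h : ∀ᶠ N : ℤ in atTop, ⌈N * α + c⌉ + ⌈s - (N * α + c)⌉ = 1) : s = 0 := by
  by_contra hs
  rcases lt_or_gt_of_ne hs with hneg | hpos
  · obtain ⟨N, ⟨K, hlo, hhi⟩, hN⟩ :=
      ((hα.frequently_exists_int_mul_add_mem_Ioo_add_int c (by linarith : 1 + s < 1)).and_eventually
        h).exists
    have hx : ⌈N * α + c⌉ ≤ K + 1 := Int.ceil_le.2 (by push_cast; linarith)
    have hy : ⌈s - (N * α + c)⌉ ≤ -K - 1 := Int.ceil_le.2 (by push_cast; linarith)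
    omega
  · obtain ⟨N, ⟨K, hlo, hhi⟩, hN⟩ :=
      ((hα.frequently_exists_int_mul_add_mem_Ioo_add_int c hpos).and_eventually h).exists
    have hx : K < ⌈N * α + c⌉ := Int.lt_ceil.2 (by linarith)
    have hy : -K < ⌈s - (N * α + c)⌉ := Int.lt_ceil.2 (by push_cast; linarith)
    omega

lemma Int.ceil_add_ceil_intCast_sub {x : ℝ} (hx : x ∉ Set.range Int.cast) (m : ℤ) :
    ⌈x⌉ + ⌈m - x⌉ = m + 1 := by
  rw [(Int.ceil_eq_floor_add_one_iff_notMem x).2 hx, sub_eq_neg_add, Int.ceil_add_intCast,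
    Int.ceil_neg]
  ring

section Counting

open Classical

variable {S T : Set ℤ}

lemma card_filter_mem_union (h : Disjoint S T) (s : Finset ℤ) :
    #{k ∈ s | k ∈ S ∪ T} = #{k ∈ s | k ∈ S} + #{k ∈ s | k ∈ T} := by
  simp only [Set.mem_union, filter_or]
  exact card_union_of_disjoint (disjoint_filter.2 fun _ _ hS hT => Set.disjoint_left.1 h hS hT)

lemma TilesN.card_filter_mem_add_card_filter_mem (h : TilesN S T) (N : ℤ) :
    #{k ∈ Icc 1 N | k ∈ S} + #{k ∈ Icc 1 N | k ∈ T} = N.toNat := by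
  rw [← card_filter_mem_union h.1, filter_true_of_mem fun k hk => h.2 ▸ (mem_Icc.1 hk).1,
    Int.card_Icc, add_sub_cancel_right]

lemma mem_union_of_card_filter_mem_add_card_filter_mem (h : Disjoint S T) {N : ℤ} (hN : 1 ≤ N)
    (hcard : #{k ∈ Icc 1 N | k ∈ S} + #{k ∈ Icc 1 N | k ∈ T} = N.toNat) : N ∈ S ∪ T := by
  rw [← card_filter_mem_union h] at hcard
  have hfull : {k ∈ Icc 1 N | k ∈ S ∪ T} = Icc 1 N :=
    eq_of_subset_of_card_le (filter_subset _ _) (by rw [hcard, Int.card_Icc, add_sub_cancel_right])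
  exact (mem_filter.1 (hfull ▸ right_mem_Icc.2 hN)).2

end Counting

section Beatty

open Classical

variable {α α' : ℝ}

lemma floor_sub_div_eq_iff (h0 : 0 < α) {x : ℝ} {k : ℤ} :
    ⌊(x - α') / α⌋ = k ↔ k * α + α' ≤ x ∧ x < (k + 1) * α + α' := by
  rw [Int.floor_eq_iff, le_div_iff₀ h0, div_lt_iff₀ h0]
  constructor <;> rintro ⟨hlo, hhi⟩ <;> constructor <;> linarith

lemma mem_beatty_iff (h0 : 0 < α) {k : ℤ} :
    k ∈ beatty α α' ↔ ∃ n : ℤ, 1 ≤ n ∧ k * α + α' ≤ n ∧ n < (k + 1) * α + α' := by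
  constructor
  · rintro ⟨n, hn, rfl⟩
    exact ⟨n, mod_cast hn, mod_cast (floor_sub_div_eq_iff h0).1 rfl⟩
  · rintro ⟨n, hn, hk⟩
    lift n to ℕ using by omega
    exact ⟨n, mod_cast hn, ((floor_sub_div_eq_iff h0).2 (mod_cast hk)).symm⟩

lemma beatty_subset_iff_add_le_one (h0 : 0 < α) :
    beatty α α' ⊆ {k | 1 ≤ k} ↔ α + α' ≤ 1 := by
  constructor
  · intro h
    have h1 : (1 : ℤ) ≤ ⌊((1 : ℕ) - α') / α⌋ := h ⟨1, le_rfl, rfl⟩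
    rw [Int.le_floor, le_div_iff₀ h0] at h1
    push_cast at h1
    linarith
  · intro h k hk
    obtain ⟨n, hn, -, hlt⟩ := (mem_beatty_iff h0).1 hk
    have hn' : (1 : ℝ) ≤ n := mod_cast hn
    have hk : (0 : ℝ) < k := pos_of_mul_pos_left (by linarith) h0.le
    exact (Int.cast_pos.1 hk : 0 < k)

lemma card_filter_mem_beatty (h0 : 0 < α) (h1 : α ≤ 1) (h : α + α' ≤ 1) (N : ℤ) :
    #{k ∈ Icc 1 N | k ∈ beatty α α'} = (⌈(N + 1) * α + α'⌉ - 1).toNat := by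
  have himage : {k ∈ Icc 1 N | k ∈ beatty α α'} =
      (Ico 1 ⌈(N + 1) * α + α'⌉).image fun n : ℤ => ⌊(n - α') / α⌋ := by
    ext k
    simp only [mem_filter, mem_Icc, mem_image, mem_Ico, mem_beatty_iff h0, Int.lt_ceil]
    constructor
    · rintro ⟨⟨-, hkN⟩, n, hn, hlo, hhi⟩
      have : (k : ℝ) * α ≤ N * α := by gcongr
      exact ⟨n, ⟨hn, by linarith⟩, (floor_sub_div_eq_iff h0).2 ⟨hlo, hhi⟩⟩
    · rintro ⟨n, ⟨hn, hnN⟩, rfl⟩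
      have hn' : (1 : ℝ) ≤ n := mod_cast hn
      refine ⟨⟨?_, ?_⟩, n, hn, (floor_sub_div_eq_iff h0).1 rfl⟩
      · rw [Int.le_floor, le_div_iff₀ h0]
        push_cast
        linarith
      · rw [← Int.lt_add_one_iff, Int.floor_lt, div_lt_iff₀ h0]
        push_cast
        linarith
  rw [himage, card_image_of_injOn, Int.card_Ico]
  intro n _ m _ hnm
  obtain ⟨hn1, hn2⟩ := (floor_sub_div_eq_iff h0).1 (rfl : ⌊((n : ℝ) - α') / α⌋ = _)
  obtain ⟨hm1, hm2⟩ := (floor_sub_div_eq_iff h0).1 hnm.symm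
  have : n < m + 1 := by exact_mod_cast (by linarith : (n : ℝ) < m + 1)
  have : m < n + 1 := by exact_mod_cast (by linarith : (m : ℝ) < n + 1)
  omega

lemma notMem_beatty_of_eq_intCast (h0 : 0 < α) (h1 : α < 1) {k z : ℤ}
    (hz : (k + 1) * α + α' = z) : k ∉ beatty α α' := by
  rintro hk
  obtain ⟨n, -, hlo, hhi⟩ := (mem_beatty_iff h0).1 hk
  have : n < z := by exact_mod_cast hz ▸ hhi
  have : z - 1 < n := by exact_mod_cast (by linarith : (z : ℝ) - 1 < n)
  omega

lemma exists_intCast_eq_of_mem_beatty_of_mem_beatty_one_sub (h0 : 0 < α) (h1 : α < 1) {k : ℤ}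
    (hA : k ∈ beatty α α') (hB : k ∈ beatty (1 - α) (-α')) :
    ∃ n : ℤ, 1 ≤ n ∧ n < k ∧ k * α + α' = n := by
  obtain ⟨n, hn, hnlo, hnhi⟩ := (mem_beatty_iff h0).1 hA
  obtain ⟨m, hm, hmlo, hmhi⟩ := (mem_beatty_iff (sub_pos.2 h1)).1 hB
  have hlt : n < k + 1 - m := by exact_mod_cast (by linarith : (n : ℝ) < k + 1 - m)
  have hle : k - m ≤ n := by exact_mod_cast (by linarith : (k : ℝ) - m ≤ n)
  obtain rfl : n = k - m := by omega
  refine ⟨k - m, hn, by omega, le_antisymm hnlo ?_⟩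
  push_cast at hmlo ⊢
  linarith

lemma TilesN.eventually_ceil_add_ceil_sub_eq_one (h0 : 0 < α) (h1 : α < 1) {β' : ℝ}
    (ht : TilesN (beatty α α') (beatty (1 - α) β')) :
    ∀ᶠ N : ℤ in atTop, ⌈N * α + (α + α')⌉ + ⌈α' + β' - (N * α + (α + α'))⌉ = 1 := by
  have hβ0 : 0 < 1 - α := sub_pos.2 h1
  have hA := (beatty_subset_iff_add_le_one h0).1 (ht.2 ▸ Set.subset_union_left)
  have hB := (beatty_subset_iff_add_le_one hβ0).1 (ht.2 ▸ Set.subset_union_right)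
  have hpos : ∀ {a : ℝ}, 0 < a → ∀ b : ℝ, ∀ᶠ N : ℤ in atTop, 0 < N * a + b := fun ha b =>
    (tendsto_atTop_add_const_right _ b
      (tendsto_intCast_atTop_atTop.atTop_mul_const ha)).eventually_gt_atTop 0
  filter_upwards [eventually_ge_atTop 1, hpos h0 (α + α'), hpos hβ0 (1 - α + β')] with N hN hx hy
  have hcount := ht.card_filter_mem_add_card_filter_mem N
  rw [card_filter_mem_beatty h0 h1.le hA, card_filter_mem_beatty hβ0 (by linarith) hB] at hcount
  have hxy : ((N : ℝ) + 1) * (1 - α) + β' =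
      ((N + 1 : ℤ) : ℝ) + (α' + β' - (N * α + (α + α'))) := by push_cast; ring
  have hx' : 0 < ⌈(N + 1) * α + α'⌉ := Int.ceil_pos.2 (by linarith)
  have hy' : 0 < ⌈((N : ℝ) + 1) * (1 - α) + β'⌉ := Int.ceil_pos.2 (by linarith)
  rw [hxy, Int.ceil_intCast_add] at hy' hcount
  rw [show ((N : ℝ) + 1) * α + α' = N * α + (α + α') by ring] at hx' hcount
  omega

lemma card_filter_mem_beatty_add_card_filter_mem_beatty_one_sub (h0 : 0 < α) (h1 : α < 1)
    (hA0 : 0 ≤ α + α') (hA1 : α + α' ≤ 1) {N : ℤ} (hN : 1 ≤ N)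
    (hx : (N + 1) * α + α' ∉ Set.range Int.cast) :
    #{k ∈ Icc 1 N | k ∈ beatty α α'} + #{k ∈ Icc 1 N | k ∈ beatty (1 - α) (-α')} = N.toNat := by
  rw [card_filter_mem_beatty h0 h1.le hA1,
    card_filter_mem_beatty (sub_pos.2 h1) (by linarith) (by linarith),
    show ((N : ℝ) + 1) * (1 - α) + -α' = ((N + 1 : ℤ) : ℝ) - ((N + 1) * α + α') by push_cast; ring]
  have hsum := Int.ceil_add_ceil_intCast_sub hx (N + 1)
  have hN' : (1 : ℝ) ≤ N := mod_cast hN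
  have hlo : 0 < ⌈(N + 1) * α + α'⌉ := Int.ceil_pos.2 (by nlinarith)
  have hhi : ⌈(N + 1) * α + α'⌉ ≤ N + 1 := Int.ceil_le.2 (by push_cast; nlinarith)
  omega

end Beatty

/-- Fraenkel's Partition Theorem, irrational case. -/
theorem stmt4 (α β α' β' : ℝ) (hirr : Irrational α) (h0 : 0 < α) (h1 : α < 1)
    (hβ : β = 1 - α) :
    TilesN (beatty α α') (beatty β β') ↔
      (0 ≤ α + α' ∧ α + α' ≤ 1 ∧ α' + β' = 0 ∧
        ∀ k : ℤ, 2 ≤ k → ¬ ∃ z : ℤ, (k : ℝ) * α + α' = (z : ℝ)) := by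
  subst hβ
  have hβ0 : 0 < 1 - α := sub_pos.2 h1
  constructor
  · intro ht
    have hA := (beatty_subset_iff_add_le_one h0).1 (ht.2 ▸ Set.subset_union_left)
    have hB := (beatty_subset_iff_add_le_one hβ0).1 (ht.2 ▸ Set.subset_union_right)
    have hs := eq_zero_of_eventually_ceil_add_ceil_sub_eq_one hirr
      (ht.eventually_ceil_add_ceil_sub_eq_one h0 h1)
    refine ⟨by linarith, hA, hs, ?_⟩
    -- both intervals attached to `k - 1` end at an integer
    rintro k hk ⟨z, hz⟩
    have hk1 : k - 1 ∈ beatty α α' ∪ beatty (1 - α) β' := ht.2 ▸ (by omega : 1 ≤ k - 1)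
    rcases hk1 with hA' | hB'
    · exact notMem_beatty_of_eq_intCast h0 h1 (z := z) (by push_cast; linarith) hA'
    · exact notMem_beatty_of_eq_intCast hβ0 (by linarith) (z := k - z) (by push_cast; linarith) hB'
  · rintro ⟨hA0, hA1, hs, hni⟩
    obtain rfl : β' = -α' := by linarith
    have hdisj : Disjoint (beatty α α') (beatty (1 - α) (-α')) :=
      Set.disjoint_left.2 fun k hA hB => by
        obtain ⟨n, hn, hnk, hkn⟩ :=
          exists_intCast_eq_of_mem_beatty_of_mem_beatty_one_sub h0 h1 hA hB
        exact hni k (by omega) ⟨n, hkn⟩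
    refine ⟨hdisj, subset_antisymm (Set.union_subset ((beatty_subset_iff_add_le_one h0).2 hA1)
      ((beatty_subset_iff_add_le_one hβ0).2 (by linarith))) fun k (hk : 1 ≤ k) => ?_⟩
    refine mem_union_of_card_filter_mem_add_card_filter_mem hdisj hk
      (card_filter_mem_beatty_add_card_filter_mem_beatty_one_sub h0 h1 hA0 hA1 hk ?_)
    rintro ⟨z, hz⟩
    exact hni (k + 1) (by omega) ⟨z, by push_cast; linarith⟩
end

section
/- For real α ∈ (0,1), real α′, and any integer k ≥ 1, the number of elements of the Beatty sequence B(α,α′) that are strictly less than k equals max{0, ⌈kα+α′⌉ − 1}. -/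
theorem stmt6 (α α' : ℝ) (h0 : 0 < α) (h1 : α < 1) (k : ℤ) (hk : 1 ≤ k) :
    ((beatty α α' ∩ {n : ℤ | n < k}).ncard : ℤ) = max 0 (⌈(k : ℝ) * α + α'⌉ - 1) := by
  set c := ⌈(k : ℝ) * α + α'⌉ with hc
  set f : ℤ → ℤ := fun n => ⌊((n : ℝ) - α') / α⌋ with hf
  -- f is strictly monotone
  have hmono : StrictMono f := by
    intro a b hab
    have h1ab : (a : ℝ) + 1 ≤ b := by exact_mod_cast hab
    have hle : ((a : ℝ) - α') / α + 1 ≤ ((b : ℝ) - α') / α := by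
      rw [div_add' _ _ _ h0.ne', div_le_div_iff_of_pos_right h0]
      linarith
    have : ⌊((a : ℝ) - α') / α⌋ + 1 ≤ ⌊((b : ℝ) - α') / α⌋ := by
      calc ⌊((a : ℝ) - α') / α⌋ + 1 = ⌊((a : ℝ) - α') / α + 1⌋ := by
            rw [Int.floor_add_one]
        _ ≤ ⌊((b : ℝ) - α') / α⌋ := Int.floor_le_floor hle
    simpa [hf] using this
  have hkey : beatty α α' ∩ {n : ℤ | n < k} = f '' (Set.Ico (1 : ℤ) c) := by
    ext x
    constructor
    · rintro ⟨⟨n, hn1, rfl⟩, hxk⟩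
      refine ⟨(n : ℤ), ⟨by exact_mod_cast hn1, ?_⟩, by simp [hf]⟩
      have : ((n : ℝ) - α') / α < k := Int.floor_lt.mp hxk
      have hlt : (n : ℝ) < (k : ℝ) * α + α' := by
        rw [div_lt_iff₀ h0] at this
        linarith
      exact Int.lt_ceil.mpr (by push_cast; exact hlt)
    · rintro ⟨a, ⟨ha1, hac⟩, rfl⟩
      constructor
      · exact ⟨a.toNat, by omega, by rw [hf]; congr 2; exact_mod_cast (Int.toNat_of_nonneg (by omega : (0:ℤ) ≤ a)).symm⟩
      · have hlt : (a : ℝ) < (k : ℝ) * α + α' := by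
          have := Int.lt_ceil.mp hac
          exact_mod_cast this
        have : ((a : ℝ) - α') / α < k := by
          rw [div_lt_iff₀ h0]
          push_cast
          linarith
        exact Int.floor_lt.mpr this
  rw [hkey, Set.ncard_image_of_injective _ hmono.injective, ← Finset.coe_Ico,
    Set.ncard_coe_finset, Int.card_Ico]
  have : (0 : ℤ) ≤ max 0 (c - 1) := le_max_left _ _
  omega
end

section
/- (Brown's Decomposition) Let α ∈ (0,1) be irrational with continuants q₀, q₁, …, and let m be a positive integer with greedy (Ostrowski) expansion m = z_t q_t + z_{t−1} q_{t−1} + ⋯ + z₀ q₀. Then C_m = (C_{q_t})^{z_t} ⬝ (C_{q_{t−1}})^{z_{t−1}} ⬝ ⋯ ⬝ (C_{q_0})^{z_0}. -/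
/-!
With `θ_k = q_k α - p_k` one has `|θ_k| = x_0 ⋯ x_k`, and by the best approximation property of
the continuants every `i α` with `1 ≤ i < q_{k+1}`, `i ≠ q_k`, lies farther than `|θ_k|` from the
integers, while for `i = q_k` one uses `2 |θ_k| < 1`. Hence adding `θ_k` to `i α` crosses no
integer, i.e. `⌊(q_k + i) α⌋ = p_k + ⌊i α⌋`, which says that `C_{q_k + n} = C_{q_k} C_n` whenever
`q_k + n < q_{k+1}`. The greedy condition keeps every remainder in this range, so the copies of
`C_{q_t}`, then of `C_{q_{t-1}}`, … can be split off one at a time.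
-/

/-- The characteristic sequence of `α`: `c_k = ⌊(k+1)α⌋ - ⌊kα⌋`. -/
noncomputable def cseq (α : ℝ) (k : ℕ) : ℤ := ⌊((k : ℝ) + 1) * α⌋ - ⌊(k : ℝ) * α⌋

/-- The word `C_m = c₁c₂⋯c_m`. -/
noncomputable def cword (α : ℝ) (m : ℕ) : List ℤ := (List.range m).map fun j => cseq α (j + 1)

open Finset

namespace BrownDecomposition

theorem floor_add_eq_floor {y θ : ℝ} (h₀ : |θ| < Int.fract y) (h₁ : |θ| < 1 - Int.fract y) :
    ⌊y + θ⌋ = ⌊y⌋ := by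
  rw [Int.fract] at h₀ h₁
  rw [Int.floor_eq_iff]
  constructor <;> linarith [neg_abs_le θ, le_abs_self θ]

theorem floor_two_mul_eq_floor {θ : ℝ} (h : 2 * |θ| < 1) : ⌊2 * θ⌋ = ⌊θ⌋ := by
  rcases le_or_gt 0 θ with hθ | hθ
  · rw [abs_of_nonneg hθ] at h
    rw [Int.floor_eq_zero_iff.mpr ⟨by linarith, h⟩, Int.floor_eq_zero_iff.mpr ⟨hθ, by linarith⟩]
  · rw [abs_of_neg hθ] at h
    have h₂ : ⌊2 * θ⌋ = -1 := by rw [Int.floor_eq_iff]; constructor <;> push_cast <;> linarith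
    have h₁ : ⌊θ⌋ = -1 := by rw [Int.floor_eq_iff]; constructor <;> push_cast <;> linarith
    rw [h₁, h₂]

theorem lt_abs_mul_sub_mul {P P' : ℝ} (hP : 0 < P) (hP' : 0 < P') {Q Q' u v : ℤ} (hQ : 0 ≤ Q)
    (h₁ : 1 ≤ u * Q + v * Q') (h₂ : u * Q + v * Q' < Q') (hne : u * Q + v * Q' ≠ Q) :
    P < |u * P - v * P'| := by
  rcases lt_trichotomy v 0 with hv | rfl | hv
  · have hu : 1 ≤ u := by by_contra! hu; nlinarith
    have hu' : (1 : ℝ) ≤ u := by exact_mod_cast hu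
    have hv' : (v : ℝ) ≤ -1 := by exact_mod_cast (show v ≤ -1 by omega)
    rw [abs_of_pos (by nlinarith)]
    nlinarith
  · have hu : 2 ≤ u := by
      have : 1 ≤ u := by by_contra! hu; nlinarith
      have : u ≠ 1 := by rintro rfl; simp at hne
      omega
    have hu' : (2 : ℝ) ≤ u := by exact_mod_cast hu
    rw [Int.cast_zero, zero_mul, sub_zero, abs_of_pos (by positivity)]
    nlinarith
  · have hu : u ≤ -1 := by by_contra! hu; nlinarith
    have hu' : (u : ℝ) ≤ -1 := by exact_mod_cast hu
    have hv' : (1 : ℝ) ≤ v := by exact_mod_cast hv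
    rw [abs_of_neg (by nlinarith)]
    nlinarith

theorem apply_mul_add_eq_flatten_replicate {β : Type*} (w : ℕ → List β) {c Q : ℕ}
    (hw : ∀ m, c + m < Q → w (c + m) = w c ++ w m) (n r : ℕ) (h : n * c + r < Q) :
    w (n * c + r) = (List.replicate n (w c)).flatten ++ w r := by
  induction n with
  | zero => simp
  | succ n ih =>
    rw [Nat.succ_mul] at h
    rw [show (n + 1) * c + r = c + (n * c + r) by ring, hw _ (by omega), ih (by omega),
      List.replicate_succ, List.flatten_cons, List.append_assoc]

theorem cword_add (α : ℝ) (m n : ℕ) :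
    cword α (m + n) = cword α m ++ (List.range n).map fun j => cseq α (m + j + 1) := by
  simp only [cword, List.range_add, List.map_append, List.map_map, Function.comp_def]

structure IsGaussOrbit (α : ℝ) (a : ℕ → ℕ) (x : ℕ → ℝ) : Prop where
  irrational : Irrational α
  zero_lt : 0 < α
  lt_one : α < 1
  zero : x 0 = α
  a_succ : ∀ i, (a (i + 1) : ℤ) = ⌊1 / x i⌋
  succ : ∀ i, x (i + 1) = 1 / x i - a (i + 1)

structure IsContinuants (a q : ℕ → ℕ) : Prop where
  zero : q 0 = 1
  one : q 1 = a 1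
  add_two : ∀ i, q (i + 2) = a (i + 2) * q (i + 1) + q i

-- `convNum a k` is the numerator `p_k` of the convergent `p_k / q_k`.
def convNum (a : ℕ → ℕ) : ℕ → ℤ
  | 0 => 0
  | 1 => 1
  | n + 2 => a (n + 2) * convNum a (n + 1) + convNum a n

variable {α : ℝ} {a q : ℕ → ℕ} {x : ℕ → ℝ}

namespace IsGaussOrbit

theorem succ_eq_fract (ho : IsGaussOrbit α a x) (k : ℕ) : x (k + 1) = Int.fract (1 / x k) := by
  rw [ho.succ k, Int.fract, ← ho.a_succ k, Int.cast_natCast]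

theorem irrational_and_mem_Ioo (ho : IsGaussOrbit α a x) (k : ℕ) :
    Irrational (x k) ∧ x k ∈ Set.Ioo 0 1 := by
  induction k with
  | zero => exact ho.zero ▸ ⟨ho.irrational, ho.zero_lt, ho.lt_one⟩
  | succ k ih =>
    have hirr : Irrational (x (k + 1)) := by
      rw [ho.succ_eq_fract, Int.fract]
      exact (one_div (x k) ▸ ih.1.inv).sub_intCast _
    refine ⟨hirr, lt_of_le_of_ne ?_ hirr.ne_zero.symm, ?_⟩
    · exact ho.succ_eq_fract k ▸ Int.fract_nonneg _
    · exact ho.succ_eq_fract k ▸ Int.fract_lt_one _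

theorem pos (ho : IsGaussOrbit α a x) (k : ℕ) : 0 < x k := (ho.irrational_and_mem_Ioo k).2.1

theorem one_le_a (ho : IsGaussOrbit α a x) (k : ℕ) : 1 ≤ a (k + 1) := by
  have hx := (ho.irrational_and_mem_Ioo k).2
  have : (1 : ℤ) ≤ a (k + 1) := ho.a_succ k ▸ Int.le_floor.mpr (by
    exact_mod_cast one_le_one_div hx.1 hx.2.le)
  exact_mod_cast this

theorem mul_succ (ho : IsGaussOrbit α a x) (k : ℕ) : x k * x (k + 1) = 1 - a (k + 1) * x k := by
  rw [ho.succ k]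
  field_simp [(ho.pos k).ne']

theorem prod_pos (ho : IsGaussOrbit α a x) (k : ℕ) : 0 < ∏ i ∈ range (k + 1), x i :=
  Finset.prod_pos fun i _ => ho.pos i

end IsGaussOrbit

namespace IsContinuants

theorem pos (hq : IsContinuants a q) (ha : 1 ≤ a 1) (k : ℕ) : 0 < q k := by
  induction k using Nat.twoStepInduction with
  | zero => simp [hq.zero]
  | one => rw [hq.one]; exact ha
  | more n ih _ => rw [hq.add_two n]; exact Nat.add_pos_right _ ih

theorem convNum_mul_sub (hq : IsContinuants a q) (k : ℕ) :
    convNum a (k + 1) * q k - convNum a k * q (k + 1) = (-1) ^ k := by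
  induction k with
  | zero => simp [hq.zero, convNum]
  | succ k ih =>
    rw [convNum, hq.add_two k, pow_succ]
    push_cast
    linear_combination -ih

end IsContinuants

theorem mul_sub_convNum (ho : IsGaussOrbit α a x) (hq : IsContinuants a q) (k : ℕ) :
    q k * α - convNum a k = (-1) ^ k * ∏ i ∈ range (k + 1), x i := by
  induction k using Nat.twoStepInduction with
  | zero => simp [hq.zero, convNum, ho.zero]
  | one =>
    simp only [hq.one, convNum, prod_range_succ, prod_range_zero, ← ho.zero]
    linear_combination ho.mul_succ 0
  | more n ih₀ ih₁ =>
    rw [hq.add_two n, convNum, prod_range_succ _ (n + 2), prod_range_succ]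
    rw [prod_range_succ] at ih₁
    push_cast
    linear_combination
      a (n + 2) * ih₁ + ih₀ - (-1) ^ n * (∏ i ∈ range (n + 1), x i) * ho.mul_succ (n + 1)

theorem prod_mul_add_eq_one (ho : IsGaussOrbit α a x) (hq : IsContinuants a q) (k : ℕ) :
    (∏ i ∈ range (k + 1), x i) * (q (k + 1) + q k * x (k + 1)) = 1 := by
  induction k with
  | zero =>
    simp only [hq.zero, hq.one, zero_add, prod_range_one]
    linear_combination ho.mul_succ 0
  | succ k ih =>
    rw [prod_range_succ, hq.add_two k]
    push_cast
    linear_combination ih + (∏ i ∈ range (k + 1), x i) * q (k + 1) * ho.mul_succ (k + 1)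

theorem q_succ_mul_prod_lt_one (ho : IsGaussOrbit α a x) (hq : IsContinuants a q) (k : ℕ) :
    q (k + 1) * ∏ i ∈ range (k + 1), x i < 1 := by
  have hpos : 0 < (∏ i ∈ range (k + 1), x i) * (q k * x (k + 1)) :=
    mul_pos (ho.prod_pos k) (mul_pos (by exact_mod_cast hq.pos (ho.one_le_a 0) k) (ho.pos _))
  linarith [prod_mul_add_eq_one ho hq k]

theorem prod_lt_abs_mul_sub (ho : IsGaussOrbit α a x) (hq : IsContinuants a q) {k i : ℕ} (j : ℤ)
    (hi : 1 ≤ i) (hik : i < q (k + 1)) (hne : i ≠ q k) :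
    ∏ l ∈ range (k + 1), x l < |i * α - j| := by
  set ε : ℤ := (-1) ^ k
  have hε : ε * ε = 1 := by rw [← pow_add, ← two_mul, pow_mul]; norm_num
  have hdet := hq.convNum_mul_sub k
  -- the coordinates of `(i, j)` in the unimodular basis `(q k, p k), (q (k+1), p (k+1))`
  set u := ε * (convNum a (k + 1) * i - q (k + 1) * j)
  set v := ε * (q k * j - convNum a k * i)
  have hi_eq : u * q k + v * q (k + 1) = i := by linear_combination (ε * i) * hdet + i * hε
  have hj_eq : u * convNum a k + v * convNum a (k + 1) = j := by
    linear_combination (ε * j) * hdet + j * hε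
  have hreal :
      i * α - j = ε * (u * ∏ l ∈ range (k + 1), x l - v * ∏ l ∈ range (k + 1 + 1), x l) := by
    have hi_eq' : (u * q k + v * q (k + 1) : ℝ) = i := by exact_mod_cast hi_eq
    have hj_eq' : (u * convNum a k + v * convNum a (k + 1) : ℝ) = j := by exact_mod_cast hj_eq
    have h₀ := mul_sub_convNum ho hq k
    have h₁ := mul_sub_convNum ho hq (k + 1)
    push_cast [ε, pow_succ] at h₀ h₁ ⊢
    linear_combination -α * hi_eq' + hj_eq' + u * h₀ + v * h₁
  rw [hreal, abs_mul, Int.cast_pow, Int.cast_neg, Int.cast_one, abs_neg_one_pow, one_mul]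
  refine lt_abs_mul_sub_mul (ho.prod_pos k) (ho.prod_pos (k + 1)) (Q' := q (k + 1))
    (Nat.cast_nonneg (q k)) ?_ ?_ ?_ <;>
    rw [hi_eq] <;> assumption_mod_cast

theorem floor_q_add_mul (ho : IsGaussOrbit α a x) (hq : IsContinuants a q) {k i : ℕ}
    (hi : 1 ≤ i) (hik : i < q (k + 1)) :
    ⌊((q k + i : ℕ) : ℝ) * α⌋ = convNum a k + ⌊(i : ℝ) * α⌋ := by
  set θ : ℝ := q k * α - convNum a k with hθ_def
  have hθ : |θ| = ∏ l ∈ range (k + 1), x l := by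
    rw [hθ_def, mul_sub_convNum ho hq, abs_mul, abs_neg_one_pow, one_mul,
      abs_of_pos (ho.prod_pos k)]
  rw [show ((q k + i : ℕ) : ℝ) * α = i * α + θ + convNum a k by push_cast; ring,
    Int.floor_add_intCast, add_comm]
  congr 1
  rcases eq_or_ne i (q k) with rfl | hne
  · -- the `i` excluded by best approximation: `q k * α = convNum a k + θ`, and `2 |θ| < 1`
    have h2 : 2 * |θ| < 1 := by
      have := q_succ_mul_prod_lt_one ho hq k
      have : (2 : ℝ) ≤ q (k + 1) := by exact_mod_cast (show 2 ≤ q (k + 1) by omega)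
      nlinarith [abs_nonneg θ]
    rw [show (q k : ℝ) * α + θ = 2 * θ + convNum a k by ring,
      show (q k : ℝ) * α = θ + convNum a k by ring, Int.floor_add_intCast, Int.floor_add_intCast,
      floor_two_mul_eq_floor h2]
  · apply floor_add_eq_floor
    · have h : |θ| < |i * α - ⌊(i : ℝ) * α⌋| := hθ ▸ prod_lt_abs_mul_sub ho hq _ hi hik hne
      rwa [Int.self_sub_floor, abs_of_nonneg (Int.fract_nonneg ((i : ℝ) * α))] at h
    · have h : |θ| < |i * α - (⌊(i : ℝ) * α⌋ + 1 : ℤ)| :=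
        hθ ▸ prod_lt_abs_mul_sub ho hq _ hi hik hne
      rwa [Int.cast_add, Int.cast_one, ← sub_sub, Int.self_sub_floor, ← neg_sub, abs_neg,
        abs_of_nonneg (a := 1 - Int.fract ((i : ℝ) * α))
          (by linarith [Int.fract_lt_one ((i : ℝ) * α)])] at h

theorem cseq_q_add (ho : IsGaussOrbit α a x) (hq : IsContinuants a q) {k j : ℕ}
    (hj : 1 ≤ j) (hjk : j + 1 < q (k + 1)) : cseq α (q k + j) = cseq α j := by
  have h₀ := floor_q_add_mul ho hq hj (by omega : j < q (k + 1))
  have h₁ := floor_q_add_mul ho hq (by omega : 1 ≤ j + 1) hjk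
  simp only [cseq]
  push_cast at h₀ h₁ ⊢
  rw [add_assoc, h₀, h₁]
  ring

theorem cword_q_add (ho : IsGaussOrbit α a x) (hq : IsContinuants a q) {k n : ℕ}
    (hn : q k + n < q (k + 1)) : cword α (q k + n) = cword α (q k) ++ cword α n := by
  have hqk := hq.pos (ho.one_le_a 0) k
  rw [cword_add, cword]
  congr 1
  refine List.map_congr_left fun j hj => ?_
  rw [List.mem_range] at hj
  rw [add_assoc]
  exact cseq_q_add ho hq (by omega) (by omega)

theorem cword_sum (ho : IsGaussOrbit α a x) (hq : IsContinuants a q) (z : ℕ → ℕ) :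
    ∀ t, (∀ j < t, ∑ i ∈ range (j + 1), z i * q i < q (j + 1)) →
      cword α (∑ i ∈ range t, z i * q i) =
        ((List.range t).reverse.map fun i => (List.replicate (z i) (cword α (q i))).flatten).flatten
  | 0, _ => by simp [cword]
  | t + 1, h => by
    rw [sum_range_succ, add_comm,
      apply_mul_add_eq_flatten_replicate (cword α) (fun _ => cword_q_add ho hq) _ _
        (by rw [add_comm, ← sum_range_succ]; exact h t (lt_add_one t)),
      cword_sum ho hq z t fun j hj => h j (by omega), List.range_succ]
    simp

end BrownDecomposition

-- `hgreedy` is the greedy condition in partial-sum form: `z_j q_j + ⋯ + z_0 q_0 < q_{j+1}`.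
theorem stmt12_general (α : ℝ) (hirr : Irrational α) (h0 : 0 < α) (h1 : α < 1)
    (a : ℕ → ℕ) (x : ℕ → ℝ) (q : ℕ → ℕ)
    (hx0 : x 0 = α)
    (ha : ∀ i, (a (i + 1) : ℤ) = ⌊1 / x i⌋)
    (hx : ∀ i, x (i + 1) = 1 / x i - (a (i + 1) : ℝ))
    (hq0 : q 0 = 1) (hq1 : q 1 = a 1)
    (hqr : ∀ i, q (i + 2) = a (i + 2) * q (i + 1) + q i)
    (m t : ℕ) (z : ℕ → ℕ)
    (hsum : m = ∑ i ∈ Finset.range (t + 1), z i * q i)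
    (hgreedy : ∀ j, j ≤ t → (∑ i ∈ Finset.range (j + 1), z i * q i) < q (j + 1)) :
    cword α m =
      (((List.range (t + 1)).reverse.map
        fun i => (List.replicate (z i) (cword α (q i))).flatten).flatten) := by
  rw [hsum]
  exact BrownDecomposition.cword_sum ⟨hirr, h0, h1, hx0, ha, hx⟩ ⟨hq0, hq1, hqr⟩ z (t + 1)
    fun j hj => hgreedy j (Nat.le_of_lt_succ hj)

/-- Brown's Decomposition: if `m = z_t q_t + ⋯ + z₀ q₀` is the greedy (Ostrowski) expansion
of `m` (equivalently, every partial sum `z_j q_j + ⋯ + z₀ q₀` is `< q_{j+1}`), then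
`C_m = (C_{q_t})^{z_t} ⬝ (C_{q_{t-1}})^{z_{t-1}} ⬝ ⋯ ⬝ (C_{q_0})^{z_0}`. -/
theorem stmt12 (α : ℝ) (hirr : Irrational α) (h0 : 0 < α) (h1 : α < 1)
    (a : ℕ → ℕ) (x : ℕ → ℝ) (q : ℕ → ℕ)
    (hx0 : x 0 = α)
    (ha : ∀ i, (a (i + 1) : ℤ) = ⌊1 / x i⌋)
    (hx : ∀ i, x (i + 1) = 1 / x i - (a (i + 1) : ℝ))
    (hq0 : q 0 = 1) (hq1 : q 1 = a 1)
    (hqr : ∀ i, q (i + 2) = a (i + 2) * q (i + 1) + q i)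
    (m t : ℕ) (z : ℕ → ℕ) (hm : 0 < m)
    (hsum : m = ∑ i ∈ Finset.range (t + 1), z i * q i)
    (hgreedy : ∀ j, j ≤ t → (∑ i ∈ Finset.range (j + 1), z i * q i) < q (j + 1)) :
    cword α m =
      (((List.range (t + 1)).reverse.map
        fun i => (List.replicate (z i) (cword α (q i))).flatten).flatten) :=
  stmt12_general α hirr h0 h1 a x q hx0 ha hx hq0 hq1 hqr m t z hsum hgreedy
end

section
/- Let α, α′, β, β′ be real with 0 < α < 1 and α + β = 1. For any integer k, k ∈ B(β,β′) if and only if kβ + β′ > 0 and kα mod 1 lies in the arc [β′, β+β′) of ℝ/ℤ. -/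
/-- With `0 < α < 1` and `β = 1 - α`: `k ∈ B(β,β')` iff `kβ + β' > 0` and `kα mod 1`
lies in the arc `[β', β+β')` of `ℝ/ℤ`. -/
theorem stmt19 (α β α' β' : ℝ) (h0 : 0 < α) (h1 : α < 1) (hβ : α + β = 1) (k : ℤ) :
    k ∈ beatty β β' ↔
      (0 < (k : ℝ) * β + β' ∧
        ∃ m : ℤ, β' ≤ (k : ℝ) * α + (m : ℝ) ∧ (k : ℝ) * α + (m : ℝ) < β + β') := by
  have hβ0 : 0 < β := by linarith
  have hβ1 : β < 1 := by linarith
  have key : (k : ℝ) * α + (k : ℝ) * β = k := by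
    rw [← mul_add, hβ, mul_one]
  constructor
  · rintro ⟨n, hn1, hk⟩
    have hle : (k : ℝ) ≤ ((n : ℝ) - β') / β := hk ▸ Int.floor_le _
    have hlt : ((n : ℝ) - β') / β < k + 1 := hk ▸ Int.lt_floor_add_one _
    have hle' : (k : ℝ) * β ≤ (n : ℝ) - β' := (le_div_iff₀ hβ0).mp hle
    have hlt' : (n : ℝ) - β' < ((k : ℝ) + 1) * β := (div_lt_iff₀ hβ0).mp hlt
    have hn1' : (1 : ℝ) ≤ (n : ℝ) := by exact_mod_cast hn1
    refine ⟨by nlinarith, (n : ℤ) - k, ?_, ?_⟩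
    · push_cast; linarith
    · push_cast; nlinarith
  · rintro ⟨hpos, m, hm1, hm2⟩
    have h1' : (k : ℝ) * β + β' ≤ (k : ℝ) + m := by linarith
    have h2' : ((k : ℝ) + m : ℝ) < (k : ℝ) * β + β' + β := by linarith
    have hkm : 0 < k + m := by
      have : (0 : ℝ) < (k : ℝ) + m := lt_of_lt_of_le hpos h1'
      exact_mod_cast this
    refine ⟨(k + m).toNat, by omega, ?_⟩
    have hcast : (((k + m).toNat : ℕ) : ℝ) = (k : ℝ) + m := by
      have h := Int.toNat_of_nonneg hkm.le
      push_cast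
      exact_mod_cast congrArg (fun z : ℤ => (z : ℝ)) h
    symm
    rw [Int.floor_eq_iff]
    rw [hcast]
    constructor
    · rw [le_div_iff₀ hβ0]; linarith
    · rw [div_lt_iff₀ hβ0]; push_cast; nlinarith
end
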